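/- arXiv:2601.12725 — 2 statements merged into one kernel-verified Lean document; each statement's English description precedes it below -/
import Mathlib

section
/- Let M and N_t be positive integers and n = M·N_t, with ℂⁿ identified with the M-fold product of ℂ^{N_t}; for x ∈ ℂⁿ write x_m ∈ ℂ^{N_t} for its m-th block. Let Q be an n×n Hermitian complex matrix, ĥ ∈ ℂⁿ, s ∈ ℝ, and let ε_1, …, ε_M ≥ 0 and λ_1, …, λ_M ≥ 0 be reals, with Λ = blkdiag(λ_1 I_{N_t}, …, λ_M I_{N_t}). If the (n+1)×(n+1) Hermitian block matrix [[Q + Λ, Q ĥ],[ĥᴴ Q, ĥᴴ Q ĥ − s − Σ_{m=1}^{M} λ_m ε_m²]] is positive semidefinite, then for every Δh ∈ ℂⁿ satisfying ‖Δh_m‖ ≤ ε_m for all m = 1, …, M, it holds that (ĥ + Δh)ᴴ Q (ĥ + Δh) ≥ s. -/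
/-
The generalized S-procedure, sufficiency direction: evaluating the quadratic form of the
bordered matrix at `(Δh, 1)` gives `Re ((ĥ + Δh)ᴴ Q (ĥ + Δh)) - s ≥ Σ_m λ_m (ε_m² - ‖Δh_m‖²)`,
and the right-hand side is nonnegative on the uncertainty set.
-/

open Matrix
open scoped ComplexOrder

/-- The Euclidean norm of the `m`-th block (of length `Nt`) of a vector indexed by
`Fin M × Fin Nt`. -/
noncomputable def blockNorm {M Nt : ℕ} (x : Fin M × Fin Nt → ℂ) (m : Fin M) : ℝ :=
  ‖(WithLp.equiv 2 (Fin Nt → ℂ)).symm (fun j => x (m, j))‖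

theorem star_sumElim_dotProduct_fromBlocks_mulVec {n R : Type*} [Fintype n] [CommSemiring R]
    [StarRing R] (A : Matrix n n R) (b x : n → R) (d : R) :
    star (Sum.elim x fun _ : Unit => (1 : R)) ⬝ᵥ
        fromBlocks A (replicateCol Unit b) (replicateRow Unit (star b)) (of fun _ _ => d) *ᵥ
          Sum.elim x (fun _ => 1) =
      star x ⬝ᵥ A *ᵥ x + star x ⬝ᵥ b + star b ⬝ᵥ x + d := by
  have hstar : star (Sum.elim x fun _ : Unit => (1 : R)) = Sum.elim (star x) fun _ => 1 := by
    funext i; cases i <;> simp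
  rw [hstar, fromBlocks_mulVec, sumElim_dotProduct_sumElim]
  simp only [Sum.elim_comp_inl, Sum.elim_comp_inr, dotProduct_add]
  simp [mulVec, dotProduct, add_assoc]

theorem Matrix.IsHermitian.star_mulVec_dotProduct {n : Type*} [Fintype n]
    {Q : Matrix n n ℂ} (hQ : Q.IsHermitian) (h x : n → ℂ) :
    star (Q *ᵥ h) ⬝ᵥ x = star h ⬝ᵥ Q *ᵥ x := by
  rw [star_mulVec, hQ.eq, ← dotProduct_mulVec]

theorem le_re_dotProduct_add_of_posSemidef_fromBlocks {n : Type*} [Fintype n]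
    {Q Λ : Matrix n n ℂ} (hQ : Q.IsHermitian) {h : n → ℂ} {c : ℂ}
    (hPSD : (fromBlocks (Q + Λ) (replicateCol Unit (Q *ᵥ h)) (replicateRow Unit (star (Q *ᵥ h)))
      (of fun _ _ => star h ⬝ᵥ Q *ᵥ h - c)).PosSemidef) (x : n → ℂ) :
    c.re ≤ (star (h + x) ⬝ᵥ Q *ᵥ (h + x)).re + (star x ⬝ᵥ Λ *ᵥ x).re := by
  have hform := hPSD.dotProduct_mulVec_nonneg (Sum.elim x fun _ => 1)
  rw [star_sumElim_dotProduct_fromBlocks_mulVec, hQ.star_mulVec_dotProduct, add_mulVec,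
    dotProduct_add] at hform
  have hexpand : star (h + x) ⬝ᵥ Q *ᵥ (h + x) =
      star x ⬝ᵥ Q *ᵥ x + star x ⬝ᵥ Q *ᵥ h + star h ⬝ᵥ Q *ᵥ x + star h ⬝ᵥ Q *ᵥ h := by
    rw [star_add, mulVec_add, add_dotProduct, dotProduct_add, dotProduct_add]
    ring
  have hre := (Complex.le_def.mp hform).1
  rw [hexpand]
  simp only [Complex.add_re, Complex.sub_re, Complex.zero_re] at hre ⊢
  linarith

theorem star_dotProduct_diagonal_ofReal_mulVec {ι : Type*} [Fintype ι] [DecidableEq ι] (d : ι → ℝ)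
    (x : ι → ℂ) :
    star x ⬝ᵥ diagonal (fun i => (d i : ℂ)) *ᵥ x = ((∑ i, d i * ‖x i‖ ^ 2 : ℝ) : ℂ) := by
  push_cast
  refine Finset.sum_congr rfl fun i _ => ?_
  rw [mulVec_diagonal, Pi.star_apply, ← Complex.mul_conj', RCLike.star_def]
  ring

theorem blockNorm_sq {M Nt : ℕ} (x : Fin M × Fin Nt → ℂ) (m : Fin M) :
    blockNorm x m ^ 2 = ∑ j, ‖x (m, j)‖ ^ 2 := by
  rw [blockNorm, EuclideanSpace.norm_sq_eq]
  rfl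

theorem star_dotProduct_blockDiagonal_mulVec {M Nt : ℕ} (lam : Fin M → ℝ)
    (x : Fin M × Fin Nt → ℂ) :
    star x ⬝ᵥ diagonal (fun p => (lam p.1 : ℂ)) *ᵥ x =
      ((∑ m, lam m * blockNorm x m ^ 2 : ℝ) : ℂ) := by
  rw [star_dotProduct_diagonal_ofReal_mulVec, Fintype.sum_prod_type]
  simp only [blockNorm_sq, Finset.mul_sum]

theorem robust_quadratic_LMI_general {M Nt : ℕ}
    (Q : Matrix (Fin M × Fin Nt) (Fin M × Fin Nt) ℂ) (hQ : Q.IsHermitian)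
    (hhat : Fin M × Fin Nt → ℂ) (s : ℝ)
    (eps lam : Fin M → ℝ) (hlam : ∀ m, 0 ≤ lam m)
    (Lam : Matrix (Fin M × Fin Nt) (Fin M × Fin Nt) ℂ)
    (hLam : Lam = Matrix.diagonal fun p => (lam p.1 : ℂ))
    (hPSD : (Matrix.fromBlocks (Q + Lam) (Matrix.replicateCol Unit (Q.mulVec hhat))
        (Matrix.replicateRow Unit (star (Q.mulVec hhat)))
        (Matrix.of fun _ _ => (star hhat ⬝ᵥ Q.mulVec hhat) - (s : ℂ) -
          ((∑ m, lam m * (eps m) ^ 2 : ℝ) : ℂ))).PosSemidef) :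
    ∀ Δh : Fin M × Fin Nt → ℂ, (∀ m, blockNorm Δh m ≤ eps m) →
      s ≤ (star (hhat + Δh) ⬝ᵥ Q.mulVec (hhat + Δh)).re := by
  intro Δh hΔh
  simp only [sub_sub] at hPSD
  have hS := le_re_dotProduct_add_of_posSemidef_fromBlocks hQ hPSD Δh
  rw [hLam, star_dotProduct_blockDiagonal_mulVec] at hS
  have hpenalty : ∑ m, lam m * blockNorm Δh m ^ 2 ≤ ∑ m, lam m * eps m ^ 2 :=
    Finset.sum_le_sum fun m _ =>
      mul_le_mul_of_nonneg_left (pow_le_pow_left₀ (norm_nonneg _) (hΔh m) 2) (hlam m)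
  simp only [Complex.add_re, Complex.ofReal_re] at hS
  linarith

/-- Robust quadratic bound from the LMI: if
`[[Q + Λ, Q ĥ],[ĥᴴ Q, ĥᴴ Q ĥ − s − ∑ λ_m ε_m²]] ⪰ 0` with
`Λ = blkdiag(λ_1 I, …, λ_M I)`, then `(ĥ + Δh)ᴴ Q (ĥ + Δh) ≥ s` for all blockwise
perturbations with `‖Δh_m‖ ≤ ε_m`. -/
theorem robust_quadratic_LMI {M Nt : ℕ} (hM : 0 < M) (hNt : 0 < Nt)
    (Q : Matrix (Fin M × Fin Nt) (Fin M × Fin Nt) ℂ) (hQ : Q.IsHermitian)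
    (hhat : Fin M × Fin Nt → ℂ) (s : ℝ)
    (eps lam : Fin M → ℝ) (heps : ∀ m, 0 ≤ eps m) (hlam : ∀ m, 0 ≤ lam m)
    (Lam : Matrix (Fin M × Fin Nt) (Fin M × Fin Nt) ℂ)
    (hLam : Lam = Matrix.diagonal fun p => (lam p.1 : ℂ))
    (hPSD : (Matrix.fromBlocks (Q + Lam) (Matrix.replicateCol Unit (Q.mulVec hhat))
        (Matrix.replicateRow Unit (star (Q.mulVec hhat)))
        (Matrix.of fun _ _ => (star hhat ⬝ᵥ Q.mulVec hhat) - (s : ℂ) -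
          ((∑ m, lam m * (eps m) ^ 2 : ℝ) : ℂ))).PosSemidef) :
    ∀ Δh : Fin M × Fin Nt → ℂ, (∀ m, blockNorm Δh m ≤ eps m) →
      s ≤ (star (hhat + Δh) ⬝ᵥ Q.mulVec (hhat + Δh)).re :=
  robust_quadratic_LMI_general Q hQ hhat s eps lam hlam Lam hLam hPSD
end

section
/- Let W, B, and Λ be n×n Hermitian complex matrices with W positive semidefinite, let ĥ ∈ ℂⁿ, let s ∈ ℝ, and for γ > 0 define M(γ) = (1/γ)·W − B and the (n+1)×(n+1) Hermitian block matrix L(γ) = [[M(γ) + Λ, M(γ) ĥ],[ĥᴴ M(γ), ĥᴴ M(γ) ĥ − s]]. If 0 < γ' ≤ γ and L(γ) is positive semidefinite, then L(γ') is positive semidefinite. -/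
open Matrix
open scoped ComplexOrder

/-- The LMI block matrix `L(γ) = [[M(γ)+Λ, M(γ)ĥ],[ĥᴴM(γ), ĥᴴM(γ)ĥ − s]]`, where
`M(γ) = (1/γ)W − B`. -/
noncomputable def robustLMI {n : ℕ} (W B Lam : Matrix (Fin n) (Fin n) ℂ)
    (hhat : Fin n → ℂ) (s : ℝ) (γ : ℝ) :
    Matrix (Fin n ⊕ Unit) (Fin n ⊕ Unit) ℂ :=
  let Mγ := ((1 / γ : ℝ) : ℂ) • W - B
  Matrix.fromBlocks (Mγ + Lam) (Matrix.replicateCol Unit (Mγ.mulVec hhat))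
    (Matrix.replicateRow Unit (star (Mγ.mulVec hhat)))
    (Matrix.of fun _ _ => (star hhat ⬝ᵥ Mγ.mulVec hhat) - (s : ℂ))

/-!
`L(γ)` depends on `γ` only through `M(γ)`, and affinely: with `K = [I | ĥ]`, replacing `M` by
`M + N` for Hermitian `N` adds `Kᴴ N K` to `L`. Lowering `γ` to `γ'` adds `N = (1/γ' − 1/γ) W ⪰ 0`,
so it adds the positive semidefinite matrix `Kᴴ N K`.
-/

namespace Matrix

variable {m R : Type*} [Fintype m] [DecidableEq m]

section Semiring

variable [Semiring R] [StarRing R]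

theorem conjTranspose_fromCols_one_replicateCol_mul_mul (N : Matrix m m R) (hN : N.IsHermitian)
    (h : m → R) :
    (fromCols 1 (replicateCol Unit h))ᴴ * N * fromCols 1 (replicateCol Unit h) =
      fromBlocks N (replicateCol Unit (N *ᵥ h)) (replicateRow Unit (star (N *ᵥ h)))
        (of fun _ _ => star h ⬝ᵥ N *ᵥ h) := by
  rw [conjTranspose_fromCols_eq_fromRows_conjTranspose, conjTranspose_replicateCol,
    conjTranspose_one, fromRows_mul, fromRows_mul_fromCols, Matrix.one_mul, Matrix.mul_one,
    Matrix.mul_one, ← replicateCol_mulVec, star_mulVec, hN.eq, ← replicateRow_vecMul,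
    replicateRow_mul_replicateCol]
  congr 1
  ext
  simp [dotProduct_mulVec]

end Semiring

variable [Ring R] [StarRing R]

def lmiBlock (M Lam : Matrix m m R) (h : m → R) (c : R) : Matrix (m ⊕ Unit) (m ⊕ Unit) R :=
  fromBlocks (M + Lam) (replicateCol Unit (M *ᵥ h)) (replicateRow Unit (star (M *ᵥ h)))
    (of fun _ _ => star h ⬝ᵥ M *ᵥ h - c)

theorem lmiBlock_add {M N : Matrix m m R} (hN : N.IsHermitian) (Lam : Matrix m m R) (h : m → R)
    (c : R) :
    lmiBlock (M + N) Lam h c =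
      lmiBlock M Lam h c +
        (fromCols 1 (replicateCol Unit h))ᴴ * N * fromCols 1 (replicateCol Unit h) := by
  rw [conjTranspose_fromCols_one_replicateCol_mul_mul N hN, lmiBlock, lmiBlock, fromBlocks_add]
  congr 1
  · abel
  · rw [add_mulVec, replicateCol_add]
  · rw [add_mulVec, star_add, replicateRow_add]
  · ext
    simp only [of_apply, add_apply, add_mulVec, dotProduct_add]
    abel

theorem PosSemidef.lmiBlock_add [PartialOrder R] [StarOrderedRing R] {M N Lam : Matrix m m R}
    {h : m → R} {c : R} (hL : (lmiBlock M Lam h c).PosSemidef) (hN : N.PosSemidef) :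
    (lmiBlock (M + N) Lam h c).PosSemidef := by
  rw [Matrix.lmiBlock_add hN.isHermitian]
  exact hL.add (hN.conjTranspose_mul_mul_same _)

end Matrix

theorem robustLMI_eq_lmiBlock {n : ℕ} (W B Lam : Matrix (Fin n) (Fin n) ℂ) (hhat : Fin n → ℂ)
    (s γ : ℝ) : robustLMI W B Lam hhat s γ = lmiBlock (((1 / γ : ℝ) : ℂ) • W - B) Lam hhat s :=
  rfl

theorem robustLMI_mono_general {n : ℕ} (W B Lam : Matrix (Fin n) (Fin n) ℂ)
    (hW : W.PosSemidef)
    (hhat : Fin n → ℂ) (s : ℝ) (γ γ' : ℝ) (hγ' : 0 < γ') (hγ : γ' ≤ γ)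
    (hPSD : (robustLMI W B Lam hhat s γ).PosSemidef) :
    (robustLMI W B Lam hhat s γ').PosSemidef := by
  have hc : (0 : ℂ) ≤ ((1 / γ' - 1 / γ : ℝ) : ℂ) :=
    Complex.zero_le_real.mpr (sub_nonneg.mpr (one_div_le_one_div_of_le hγ' hγ))
  have hM : ((1 / γ' : ℝ) : ℂ) • W - B =
      (((1 / γ : ℝ) : ℂ) • W - B) + ((1 / γ' - 1 / γ : ℝ) : ℂ) • W := by
    push_cast
    module
  rw [robustLMI_eq_lmiBlock] at hPSD
  rw [robustLMI_eq_lmiBlock, hM]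
  exact hPSD.lmiBlock_add (hW.smul hc)

/-- Monotonicity of the robust LMI in the SINR threshold `γ`: if `0 < γ' ≤ γ` and
`L(γ) ⪰ 0`, then `L(γ') ⪰ 0`. -/
theorem robustLMI_mono {n : ℕ} (W B Lam : Matrix (Fin n) (Fin n) ℂ)
    (hW : W.PosSemidef) (hB : B.IsHermitian) (hLam : Lam.IsHermitian)
    (hhat : Fin n → ℂ) (s : ℝ) (γ γ' : ℝ) (hγ' : 0 < γ') (hγ : γ' ≤ γ)
    (hPSD : (robustLMI W B Lam hhat s γ).PosSemidef) :
    (robustLMI W B Lam hhat s γ').PosSemidef :=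
  robustLMI_mono_general W B Lam hW hhat s γ γ' hγ' hγ hPSD
end
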